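/- Fix a real number q > 1 and an integer n ≥ 1. Then φ_z(n) is real for every real z with 0 < z < τ/2, and there exists a real z with 0 < z < τ/2 such that φ_z(n) = 0. -/
import Mathlib


/-- `q^w = exp(w log q)`. -/
noncomputable def qpow (q : ℝ) (w : ℂ) : ℂ := Complex.exp (w * (Real.log q : ℂ))

/-- `τ = 2π / log q`. -/
noncomputable def tauq (q : ℝ) : ℝ := 2 * Real.pi / Real.log q

/-- The elementary spherical function value `φ_z(n)` on a homogeneous tree of degree
`q+1`: `φ_z(0) = 1` and for `n ≥ 1`,
`φ_z(n) = (1/(q+1))·[q^{1-n/2}(q^{iz(n+1)} - q^{-iz(n+1)}) - q^{-n/2}(q^{iz(n-1)} - q^{-iz(n-1)})] / (q^{iz} - q^{-iz})`. -/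
noncomputable def phiSph (q : ℝ) (z : ℂ) (n : ℕ) : ℂ :=
  if n = 0 then 1 else
    (1 / ((q : ℂ) + 1)) *
      ((qpow q (1 - (n : ℂ) / 2) *
          (qpow q (Complex.I * z * ((n : ℂ) + 1)) - qpow q (-(Complex.I * z) * ((n : ℂ) + 1))) -
        qpow q (-(n : ℂ) / 2) *
          (qpow q (Complex.I * z * ((n : ℂ) - 1)) - qpow q (-(Complex.I * z) * ((n : ℂ) - 1)))) /
        (qpow q (Complex.I * z) - qpow q (-(Complex.I * z))))

lemma qpow_I_sub (q z r : ℝ) :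
    qpow q (Complex.I * (z:ℂ) * (r:ℂ)) - qpow q (-(Complex.I * (z:ℂ)) * (r:ℂ)) =
      2 * Complex.I * (Real.sin (r * (z * Real.log q)) : ℂ) := by
  unfold qpow
  have h1 : Complex.I * (z:ℂ) * (r:ℂ) * (Real.log q : ℂ)
      = ((r * (z * Real.log q) : ℝ) : ℂ) * Complex.I := by push_cast; ring
  have h2 : -(Complex.I * (z:ℂ)) * (r:ℂ) * (Real.log q : ℂ)
      = (-((r * (z * Real.log q) : ℝ) : ℂ)) * Complex.I := by push_cast; ring
  rw [h1, h2, Complex.exp_mul_I, Complex.exp_mul_I, Complex.cos_neg, Complex.sin_neg,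
    ← Complex.ofReal_sin]
  ring

lemma qpow_real (q : ℝ) (hq : 0 < q) (r : ℝ) : qpow q ((r : ℝ) : ℂ) = ((q ^ r : ℝ) : ℂ) := by
  unfold qpow
  rw [Real.rpow_def_of_pos hq, ← Complex.ofReal_mul, Complex.ofReal_exp, mul_comm]

lemma div_twoI (a b s1 s2 s : ℂ) :
    (a * (2 * Complex.I * s1) - b * (2 * Complex.I * s2)) / (2 * Complex.I * s)
      = (a * s1 - b * s2) / s := by
  rw [show a * (2 * Complex.I * s1) - b * (2 * Complex.I * s2)
      = (2 * Complex.I) * (a * s1 - b * s2) by ring]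
  exact mul_div_mul_left _ _ (by simp [Complex.I_ne_zero])

lemma phi_eq (q : ℝ) (hq : 1 < q) (n : ℕ) (hn : 1 ≤ n) (z : ℝ) :
    phiSph q (z : ℂ) n =
      Complex.ofReal ((1 / (q + 1)) *
        (q ^ (1 - (n:ℝ)/2) * Real.sin (((n:ℝ)+1) * (z * Real.log q))
          - q ^ (-(n:ℝ)/2) * Real.sin (((n:ℝ)-1) * (z * Real.log q)))
        / Real.sin (1 * (z * Real.log q))) := by
  have hq0 : (0:ℝ) < q := lt_trans one_pos hq
  unfold phiSph
  rw [if_neg (by omega)]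
  have e1 : (1 - (n : ℂ) / 2) = (((1 - (n:ℝ)/2 : ℝ)) : ℂ) := by push_cast; ring
  have e2 : (-(n : ℂ) / 2) = (((-(n:ℝ)/2 : ℝ)) : ℂ) := by push_cast; ring
  have e3 : (Complex.I * (z:ℂ) * ((n : ℂ) + 1)) = Complex.I * (z:ℂ) * ((((n:ℝ)+1 : ℝ)) : ℂ) := by
    push_cast; ring
  have e4 : (-(Complex.I * (z:ℂ)) * ((n : ℂ) + 1)) = -(Complex.I * (z:ℂ)) * ((((n:ℝ)+1 : ℝ)) : ℂ) := by
    push_cast; ring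
  have e5 : (Complex.I * (z:ℂ) * ((n : ℂ) - 1)) = Complex.I * (z:ℂ) * ((((n:ℝ)-1 : ℝ)) : ℂ) := by
    push_cast; ring
  have e6 : (-(Complex.I * (z:ℂ)) * ((n : ℂ) - 1)) = -(Complex.I * (z:ℂ)) * ((((n:ℝ)-1 : ℝ)) : ℂ) := by
    push_cast; ring
  have e7 : (Complex.I * (z:ℂ)) = Complex.I * (z:ℂ) * (((1:ℝ)) : ℂ) := by push_cast; ring
  have e8 : (-(Complex.I * (z:ℂ))) = -(Complex.I * (z:ℂ)) * (((1:ℝ)) : ℂ) := by push_cast; ring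
  rw [e1, e2, e3, e4, e5, e6]
  rw [show (qpow q (Complex.I * (z:ℂ)) - qpow q (-(Complex.I * (z:ℂ))))
      = qpow q (Complex.I * (z:ℂ) * (((1:ℝ)):ℂ)) - qpow q (-(Complex.I * (z:ℂ)) * (((1:ℝ)):ℂ)) by
    rw [← e7, ← e8]]
  rw [qpow_I_sub, qpow_I_sub, qpow_I_sub, qpow_real q hq0, qpow_real q hq0, div_twoI]
  push_cast
  ring

/-- For every `n ≥ 1`, `φ_z(n)` is real for real `z ∈ (0, τ/2)`, and `φ_z(n)` vanishes at
some real `z ∈ (0, τ/2)`. -/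
theorem stmt12 (q : ℝ) (hq : 1 < q) (n : ℕ) (hn : 1 ≤ n) :
    (∀ z : ℝ, 0 < z → z < tauq q / 2 → (phiSph q (z : ℂ) n).im = 0) ∧
    ∃ z : ℝ, 0 < z ∧ z < tauq q / 2 ∧ phiSph q (z : ℂ) n = 0 := by
  have hq0 : (0:ℝ) < q := lt_trans one_pos hq
  have hlog : 0 < Real.log q := Real.log_pos hq
  constructor
  · intro z _ _
    rw [phi_eq q hq n hn z]
    exact Complex.ofReal_im _
  · -- IVT for f θ = q sin((n+1)θ) - sin((n-1)θ)
    set f : ℝ → ℝ := fun θ => q * Real.sin (((n:ℝ)+1) * θ) - Real.sin (((n:ℝ)-1) * θ) with hf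
    have hn1 : (0:ℝ) < (n:ℝ) + 1 := by positivity
    set a : ℝ := Real.pi / (2 * ((n:ℝ)+1)) with ha
    set b : ℝ := Real.pi / ((n:ℝ)+1) with hb
    have hπ : 0 < Real.pi := Real.pi_pos
    have hab : a ≤ b := by
      rw [ha, hb]
      apply div_le_div_of_nonneg_left hπ.le hn1
      · nlinarith
    have ha0 : 0 < a := by positivity
    have hbπ : b ≤ Real.pi := by
      rw [hb, div_le_iff₀ hn1]; nlinarith [(Nat.one_le_cast (α := ℝ)).2 hn]
    have hfa : 0 ≤ f a := by
      have : ((n:ℝ)+1) * a = Real.pi / 2 := by rw [ha]; field_simp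
      rw [hf]; simp only [this, Real.sin_pi_div_two]
      nlinarith [Real.sin_le_one (((n:ℝ)-1) * a)]
    have hfb : f b ≤ 0 := by
      have h1 : ((n:ℝ)+1) * b = Real.pi := by rw [hb]; field_simp
      have hcn : (1:ℝ) ≤ (n:ℝ) := (Nat.one_le_cast (α := ℝ)).2 hn
      have h2 : 0 ≤ Real.sin (((n:ℝ)-1) * b) := by
        apply Real.sin_nonneg_of_nonneg_of_le_pi
        · apply mul_nonneg (by linarith) (by positivity)
        · calc ((n:ℝ)-1) * b ≤ ((n:ℝ)+1) * b := by nlinarith [le_of_lt (show 0 < b by positivity)]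
            _ = Real.pi := h1
      rw [hf]; simp only [h1, Real.sin_pi]
      nlinarith
    have hcont : ContinuousOn f (Set.Icc a b) := by
      apply Continuous.continuousOn; fun_prop
    have := intermediate_value_Icc' hab hcont
    have h0mem : (0:ℝ) ∈ Set.Icc (f b) (f a) := ⟨hfb, hfa⟩
    obtain ⟨θ, hθmem, hθ⟩ := this h0mem
    obtain ⟨hθa, hθb⟩ := hθmem
    have hθ0 : 0 < θ := lt_of_lt_of_le ha0 hθa
    have hθπ : θ < Real.pi := by
      have : b < Real.pi ∨ b = Real.pi := lt_or_eq_of_le hbπ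
      rcases this with h | h
      · linarith
      · -- b = π forces n = 0, contradiction with n ≥ 1
        exfalso
        have hcn : (1:ℝ) ≤ (n:ℝ) := (Nat.one_le_cast (α := ℝ)).2 hn
        rw [hb, div_eq_iff (ne_of_gt hn1)] at h
        nlinarith
    refine ⟨θ / Real.log q, by positivity, ?_, ?_⟩
    · have htau : tauq q / 2 = Real.pi / Real.log q := by
        unfold tauq; field_simp
      rw [htau, div_lt_div_iff_of_pos_right hlog]
      exact hθπ
    · rw [phi_eq q hq n hn]
      have hzθ : θ / Real.log q * Real.log q = θ := div_mul_cancel₀ θ (ne_of_gt hlog)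
      rw [hzθ]
      have hrw : q ^ (1 - (n:ℝ)/2) = q ^ (-(n:ℝ)/2) * q := by
        rw [show (1 - (n:ℝ)/2) = (-(n:ℝ)/2) + 1 by ring, Real.rpow_add hq0, Real.rpow_one]
      have hnum : q ^ (1 - (n:ℝ)/2) * Real.sin (((n:ℝ)+1) * θ)
          - q ^ (-(n:ℝ)/2) * Real.sin (((n:ℝ)-1) * θ) = 0 := by
        have := hθ
        rw [hf] at this
        simp only at this
        have h2 : Real.sin (((n:ℝ) - 1) * θ) = q * Real.sin (((n:ℝ) + 1) * θ) := by linarith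
        rw [hrw, h2]; ring
      rw [hnum]
      simp
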